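/- arXiv:1911.05908 — 5 statements merged into one kernel-verified Lean document; each statement's English description precedes it below -/
import Mathlib

section
/- Let Γ be a conjunctive stratified base and Γ^Max the output of the greedy maximal-consistent-subset algorithm. Then Γ^Max is maximal among rank-respecting consistent unions of strata: for any consistent set Γ' that is a union of strata Γ_i, if some stratum Γ_i ⊆ Γ' is not contained in Γ^Max, then there exists a stratum Γ_j ⊆ Γ^Max with Γ_j ⊄ Γ' and j < i. -/
variable {P : Type} [DecidableEq P]

abbrev Lit (P : Type) := P × Bool

def Lit.negate (l : Lit P) : Lit P := (l.1, !l.2)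

def ConsistentLits' (S : Set (Lit P)) : Prop := ∀ l ∈ S, Lit.negate l ∉ S

open Classical in
/-- Greedy algorithm: process strata `0,…,n-1` in rank order. -/
noncomputable def greedy (strata : ℕ → Finset (Lit P)) : ℕ → Finset (Lit P)
  | 0 => ∅
  | i + 1 =>
    let acc := greedy strata i
    if (∃ l ∈ strata i, l.negate ∈ strata i) ∨ (∃ l ∈ strata i, l.negate ∈ acc)
    then acc
    else acc ∪ strata i

open Classical in
lemma greedy_succ (strata : ℕ → Finset (Lit P)) (k : ℕ) :
    greedy strata (k + 1) =
      if (∃ l ∈ strata k, l.negate ∈ strata k) ∨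
          (∃ l ∈ strata k, l.negate ∈ greedy strata k)
      then greedy strata k
      else greedy strata k ∪ strata k := rfl

lemma greedy_mono (strata : ℕ → Finset (Lit P)) :
    ∀ {m m' : ℕ}, m ≤ m' → greedy strata m ⊆ greedy strata m' := by
  intro m m' h
  induction m' with
  | zero =>
    have : m = 0 := Nat.le_zero.mp h
    subst this; exact fun x hx => hx
  | succ k ih =>
    rcases Nat.lt_or_ge m (k + 1) with h' | h'
    · have hsub := ih (Nat.lt_succ_iff.mp h')
      intro x hx
      have hx' := hsub hx
      rw [greedy_succ]
      split
      · exact hx'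
      · exact Finset.mem_union_left _ hx'
    · have : m = k + 1 := le_antisymm h h'
      subst this; exact fun x hx => hx

lemma greedy_elem (strata : ℕ → Finset (Lit P)) :
    ∀ m, ∀ x ∈ greedy strata m,
      ∃ j < m, x ∈ strata j ∧ strata j ⊆ greedy strata (j + 1) := by
  intro m
  induction m with
  | zero => intro x hx; simp [greedy] at hx
  | succ k ih =>
    intro x hx
    by_cases hc : (∃ l ∈ strata k, l.negate ∈ strata k) ∨
        (∃ l ∈ strata k, l.negate ∈ greedy strata k)
    · rw [greedy_succ, if_pos hc] at hx
      obtain ⟨j, hj, h1, h2⟩ := ih x hx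
      exact ⟨j, Nat.lt_succ_of_lt hj, h1, h2⟩
    · rw [greedy_succ, if_neg hc] at hx
      rcases Finset.mem_union.mp hx with h | h
      · obtain ⟨j, hj, h1, h2⟩ := ih x h
        exact ⟨j, Nat.lt_succ_of_lt hj, h1, h2⟩
      · refine ⟨k, Nat.lt_succ_self k, h, ?_⟩
        rw [greedy_succ, if_neg hc]
        exact Finset.subset_union_right

/-- `Γ^Max` is maximal among rank-respecting consistent unions of
strata: for any consistent union `Γ'` of strata, if some stratum `Γ_i ⊆ Γ'` is
not contained in `Γ^Max`, then some stratum `Γ_j ⊆ Γ^Max` with `j < i` is not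
contained in `Γ'`. -/
theorem greedy_maximal (strata : ℕ → Finset (Lit P)) (n : ℕ)
    (T : Set ℕ) (hT : ∀ i ∈ T, i ≤ n)
    (Γ' : Set (Lit P)) (hΓ' : Γ' = {l | ∃ i ∈ T, l ∈ strata i})
    (hcons : ConsistentLits' Γ')
    (i : ℕ) (hi : i ≤ n)
    (hsub : ↑(strata i) ⊆ Γ')
    (hnot : ¬ (strata i ⊆ greedy strata (n + 1))) :
    ∃ j < i, strata j ⊆ greedy strata (n + 1) ∧ ¬ (↑(strata j) ⊆ Γ') := by
  -- stratum i was skipped at step i+1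
  by_cases hc : (∃ l ∈ strata i, l.negate ∈ strata i) ∨
      (∃ l ∈ strata i, l.negate ∈ greedy strata i)
  · rcases hc with ⟨l, hl, hnl⟩ | ⟨l, hl, hnl⟩
    · -- strata i internally inconsistent: contradicts hsub + hcons
      exact absurd (hsub hnl) (hcons l (hsub hl))
    · -- l.negate ∈ greedy strata i: find its source stratum j
      obtain ⟨j, hj, h1, h2⟩ := greedy_elem strata i l.negate hnl
      refine ⟨j, hj, h2.trans (greedy_mono strata (by omega)), ?_⟩
      intro hjsub
      exact hcons l (hsub hl) (hjsub h1)
  · -- strata i was added, so strata i ⊆ greedy (i+1) ⊆ greedy (n+1)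
    exfalso
    apply hnot
    have : strata i ⊆ greedy strata (i + 1) := by
      rw [greedy_succ, if_neg hc]
      exact Finset.subset_union_right
    exact this.trans (greedy_mono strata (by omega))
end

section
/- After a radical upgrade of a total preorder ≤ on a finite nonempty W by a nonempty set A, the set of ≤_{⇑A}-minimal worlds equals the set of ≤-minimal worlds of A, i.e. Min_{≤_{⇑A}} W = Min_≤ A. -/
def radicalUpgrade {W : Type} (le : W → W → Prop) (A : Set W) (x y : W) : Prop :=
  (le x y ∧ ¬ (x ∉ A ∧ y ∈ A)) ∨ (x ∈ A ∧ y ∉ A)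

/-- `Min_r S`: the `r`-minimal elements of `S`. -/
def minSet {W : Type} (r : W → W → Prop) (S : Set W) : Set W :=
  {w ∈ S | ∀ w' ∈ S, r w' w → r w w'}

/-- after a radical upgrade of a total preorder on a finite
nonempty `W` by a nonempty `A`, the minimal worlds of the upgraded order are
exactly the `≤`-minimal worlds of `A`. -/
theorem radicalUpgrade_min {W : Type} [Finite W] [Nonempty W]
    (le : W → W → Prop) (A : Set W) (hA : A.Nonempty)
    (hrefl : Reflexive le) (htrans : Transitive le)
    (htotal : ∀ x y, le x y ∨ le y x) :
    minSet (radicalUpgrade le A) Set.univ = minSet le A := by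
  ext w
  simp only [minSet, radicalUpgrade, Set.mem_setOf_eq, Set.mem_univ, true_and]
  constructor
  · rintro h
    obtain ⟨a, ha⟩ := hA
    have hwA : w ∈ A := by
      by_contra hw
      have := h a trivial (Or.inr ⟨ha, hw⟩)
      rcases this with ⟨_, hn⟩ | ⟨hw', _⟩
      · exact hn ⟨hw, ha⟩
      · exact hw hw'
    refine ⟨hwA, fun w' hw' hle => ?_⟩
    have := h w' trivial (Or.inl ⟨hle, fun hc => hc.1 hw'⟩)
    rcases this with ⟨hle', _⟩ | ⟨_, hw''⟩
    · exact hle'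
    · exact absurd hw' hw''
  · rintro ⟨hwA, h⟩ w' _ hr
    by_cases hw' : w' ∈ A
    · rcases hr with ⟨hle, _⟩ | ⟨_, hn⟩
      · exact Or.inl ⟨h w' hw' hle, fun hc => hc.1 hwA⟩
      · exact absurd hwA hn
    · exact Or.inr ⟨hwA, hw'⟩
end

section
/- After lexicographic contraction of a total preorder ≤ by a nonempty proper subset A of a finite set W, the minimal worlds of the contracted order consist of the ≤-minimal worlds of A together with the ≤-minimal worlds of W∖A; in particular neither A nor its complement contains all minimal worlds, so the agent neither 'believes A' nor 'believes not-A' after contraction. -/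
def lexContraction {W : Type} (le : W → W → Prop) (A : Set W)
    (dA dC : W → ℕ) (x y : W) : Prop :=
  (x ∈ A ∧ y ∈ A ∧ le x y) ∨
  (x ∉ A ∧ y ∉ A ∧ le x y) ∨
  (x ∈ A ∧ y ∉ A ∧ dA x ≤ dC y) ∨
  (x ∉ A ∧ y ∈ A ∧ dC x ≤ dA y)

/-- after lexicographic contraction of a total preorder by a
nonempty proper subset `A`, the minimal worlds are exactly the `≤`-minimal
worlds of `A` together with those of `W ∖ A`; in particular neither `A` nor
its complement contains all minimal worlds, so the agent neither believes `A`
nor believes not-`A`. The degree functions are ranks: order-isomorphic to the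
restriction of `le` on their side, taking value `0` exactly on minimal
elements of that side. -/
theorem lexContraction_min {W : Type} [Finite W]
    (le : W → W → Prop) (A : Set W) (hA : A.Nonempty) (hAc : Aᶜ.Nonempty)
    (hrefl : Reflexive le) (htrans : Transitive le)
    (htotal : ∀ x y, le x y ∨ le y x)
    (dA dC : W → ℕ)
    (hdA : ∀ x ∈ A, ∀ y ∈ A, (dA x ≤ dA y ↔ le x y))
    (hdC : ∀ x ∈ Aᶜ, ∀ y ∈ Aᶜ, (dC x ≤ dC y ↔ le x y))
    (hdA0 : ∀ x ∈ A, (dA x = 0 ↔ x ∈ minSet le A))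
    (hdC0 : ∀ x ∈ Aᶜ, (dC x = 0 ↔ x ∈ minSet le Aᶜ)) :
    minSet (lexContraction le A dA dC) Set.univ = minSet le A ∪ minSet le Aᶜ ∧
      ¬ (minSet (lexContraction le A dA dC) Set.univ ⊆ A) ∧
      ¬ (minSet (lexContraction le A dA dC) Set.univ ⊆ Aᶜ) := by
  -- minimal elements of A and Aᶜ exist
  have hminA : ∃ x, x ∈ minSet le A := by
    obtain ⟨x, hxA, hxmin⟩ := Set.exists_min_image A dA A.toFinite hA
    exact ⟨x, hxA, fun y hy _ => (hdA x hxA y hy).1 (hxmin y hy)⟩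
  have hminC : ∃ x, x ∈ minSet le Aᶜ := by
    obtain ⟨x, hxA, hxmin⟩ := Set.exists_min_image Aᶜ dC Aᶜ.toFinite hAc
    exact ⟨x, hxA, fun y hy _ => (hdC x hxA y hy).1 (hxmin y hy)⟩
  -- a minSet-le element is below everything on its side
  have hbelow : ∀ S : Set W, ∀ x ∈ minSet le S, ∀ y ∈ S, le x y := by
    rintro S x ⟨hxS, hx⟩ y hyS
    rcases htotal x y with h | h
    · exact h
    · exact hx y hyS h
  have heq : minSet (lexContraction le A dA dC) Set.univ
      = minSet le A ∪ minSet le Aᶜ := by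
    ext x
    constructor
    · rintro ⟨-, hx⟩
      by_cases hxA : x ∈ A
      · left
        refine ⟨hxA, fun y hyA hyx => ?_⟩
        have := hx y (Set.mem_univ y) (Or.inl ⟨hyA, hxA, hyx⟩)
        rcases this with ⟨_, _, h⟩ | ⟨h, _⟩ | ⟨_, h, _⟩ | ⟨h, _⟩
        · exact h
        · exact absurd hxA h
        · exact absurd hyA h
        · exact absurd hxA h
      · right
        refine ⟨hxA, fun y hyA hyx => ?_⟩
        have := hx y (Set.mem_univ y) (Or.inr (Or.inl ⟨hyA, hxA, hyx⟩))
        rcases this with ⟨h, _⟩ | ⟨_, _, h⟩ | ⟨h, _, _⟩ | ⟨_, h, _⟩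
        · exact absurd h hxA
        · exact h
        · exact absurd h hxA
        · exact absurd h hyA
    · intro hx
      refine ⟨Set.mem_univ x, fun y _ _ => ?_⟩
      rcases hx with hx | hx
      · have hxA := hx.1
        have h0 : dA x = 0 := (hdA0 x hxA).2 hx
        by_cases hyA : y ∈ A
        · exact Or.inl ⟨hxA, hyA, hbelow A x hx y hyA⟩
        · exact Or.inr (Or.inr (Or.inl ⟨hxA, hyA, by omega⟩))
      · have hxC := hx.1
        have h0 : dC x = 0 := (hdC0 x hxC).2 hx
        by_cases hyA : y ∈ A
        · exact Or.inr (Or.inr (Or.inr ⟨hxC, hyA, by omega⟩))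
        · exact Or.inr (Or.inl ⟨hxC, hyA, hbelow Aᶜ x hx y hyA⟩)
  refine ⟨heq, ?_, ?_⟩
  · obtain ⟨x, hx⟩ := hminC
    intro hsub
    exact hx.1 (hsub (heq ▸ Or.inr hx))
  · obtain ⟨x, hx⟩ := hminA
    intro hsub
    exact (hsub (heq ▸ Or.inl hx)) hx.1
end

section
/- The contraction algorithm on conjunctive stratified bases achieves success: if Γ is a conjunctive stratified base and φ a consistent conjunction of literals, then the contracted base Cont(Γ, φ), obtained by deleting from every formula of Γ all literals over propositional symbols of φ, has the property that its maximal consistent subset Γ_{⇓φ}^Max does not entail φ (provided φ contains at least one literal). -/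
variable {P : Type} [DecidableEq P]

def ConsistentLits (S : Finset (Lit P)) : Prop := ∀ l ∈ S, l.negate ∉ S

def satLit (w : P → Bool) (l : Lit P) : Prop := w l.1 = l.2

/-- `Cont(Γ, φ)`: delete from each stratum all literals over symbols of `φ`. -/
def contBase (strata : ℕ → Finset (Lit P)) (φ : Finset (Lit P)) :
    ℕ → Finset (Lit P) :=
  fun i => (strata i).filter (fun l => l.1 ∉ φ.image Prod.fst)

lemma negate_negate (l : Lit P) : l.negate.negate = l := by
  simp [Lit.negate]

lemma greedy_consistent (strata : ℕ → Finset (Lit P)) :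
    ∀ i, ConsistentLits (greedy strata i) := by
  intro i
  induction i with
  | zero => intro l hl; rw [greedy] at hl; exact absurd hl (Finset.notMem_empty _)
  | succ i ih =>
    intro l hl hneg
    rw [greedy] at hl hneg

    by_cases hc : (∃ l ∈ strata i, l.negate ∈ strata i) ∨
        (∃ l ∈ strata i, l.negate ∈ greedy strata i)
    · rw [if_pos hc] at hl hneg
      exact ih l hl hneg
    · rw [if_neg hc] at hl hneg
      push_neg at hc
      obtain ⟨h1, h2⟩ := hc
      rcases Finset.mem_union.1 hl with hl | hl <;>
        rcases Finset.mem_union.1 hneg with hn | hn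
      · exact ih l hl hn
      · exact h2 l.negate hn (by rw [negate_negate]; exact hl)
      · exact h2 l hl hn
      · exact h1 l hl hn

lemma greedy_symbols (strata : ℕ → Finset (Lit P)) (φ : Finset (Lit P)) :
    ∀ i, ∀ l ∈ greedy (contBase strata φ) i, l.1 ∉ φ.image Prod.fst := by
  intro i
  induction i with
  | zero => intro l hl; rw [greedy] at hl; exact absurd hl (Finset.notMem_empty _)
  | succ i ih =>
    intro l hl
    rw [greedy] at hl

    split at hl
    · exact ih l hl
    · rcases Finset.mem_union.1 hl with hl | hl
      · exact ih l hl
      · exact (Finset.mem_filter.1 hl).2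

/-- success of contraction: for a conjunctive stratified base and
a nonempty consistent conjunction of literals `φ`, the maximal consistent
subset of the contracted base does not propositionally entail `φ`. -/
theorem contraction_success (strata : ℕ → Finset (Lit P)) (n : ℕ)
    (φ : Finset (Lit P)) (hφne : φ.Nonempty) (hφ : ConsistentLits φ) :
    ¬ (∀ w : P → Bool,
        (∀ l ∈ greedy (contBase strata φ) (n + 1), satLit w l) →
        ∀ l ∈ φ, satLit w l) := by
  intro h
  obtain ⟨l₀, hl₀⟩ := hφne
  classical
  set G := greedy (contBase strata φ) (n + 1) with hG
  set w : P → Bool := fun p => if p = l₀.1 then !l₀.2 else decide ((p, true) ∈ G) with hw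
  have hsat : ∀ l ∈ G, satLit w l := by
    intro l hl
    have hne : l.1 ≠ l₀.1 := by
      intro heq
      exact greedy_symbols strata φ (n + 1) l hl
        (Finset.mem_image.2 ⟨l₀, hl₀, heq.symm⟩)
    have hcons := greedy_consistent (contBase strata φ) (n + 1)
    unfold w
    simp only [satLit, if_neg hne]
    cases hb : l.2 with
    | true =>
      have : (l.1, true) ∈ G := by rw [← hb]; exact hl
      simp [this]
    | false =>
      have : (l.1, true) ∉ G := by
        intro hmem
        have := hcons l hl
        apply this
        have : l.negate = (l.1, true) := by
          simp [Lit.negate, hb]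
        rw [this]; exact hmem
      simp [this]
  have := h w hsat l₀ hl₀
  unfold w at this
  simp [satLit] at this
end

section
/- For a stratified base Γ and the induced preorder ≤_Γ on the set of all valuations satisfying a knowledge base K, the ≤_Γ-minimal worlds all satisfy Γ^Max: if w is minimal with respect to ≤_Γ among worlds of ⟦K⟧, then w satisfies every literal in Γ^Max, where Γ is a conjunctive stratified base, K is a consistent set of conjunctive formulas with the rank-0 stratum of Γ equal to the literals of K, and Γ^Max is the greedy maximal consistent subset. -/
variable {P : Type} [DecidableEq P]

/-- `w` satisfies stratum `i`. -/
def satStratum (strata : ℕ → Finset (Lit P)) (i : ℕ) (w : P → Bool) : Prop :=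
  ∀ l ∈ strata i, satLit w l

/-- The preorder on worlds induced by a stratified base. -/
def leGamma (strata : ℕ → Finset (Lit P)) (w w' : P → Bool) : Prop :=
  ∀ i : ℕ, (satStratum strata i w' → satStratum strata i w) ∨
    ∃ j < i, satStratum strata j w ∧ ¬ satStratum strata j w'

namespace GMaxAux

variable {P : Type} [DecidableEq P]

lemma negate_negate (l : Lit P) : l.negate.negate = l := by
  simp [Lit.negate]

lemma satLit_not_both {w : P → Bool} {l : Lit P} (h1 : satLit w l)
    (h2 : satLit w l.negate) : False := by
  simp [satLit, Lit.negate] at h1 h2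
  rw [h1] at h2
  simp at h2

open Classical in
lemma greedy_succ (strata : ℕ → Finset (Lit P)) (i : ℕ) :
    greedy strata (i + 1) =
      if (∃ l ∈ strata i, l.negate ∈ strata i) ∨
          (∃ l ∈ strata i, l.negate ∈ greedy strata i)
      then greedy strata i
      else greedy strata i ∪ strata i := by
  rfl

lemma greedy_sub_succ (strata : ℕ → Finset (Lit P)) (i : ℕ) :
    greedy strata i ⊆ greedy strata (i + 1) := by
  rw [greedy_succ]
  split
  · exact Finset.Subset.refl _
  · exact Finset.subset_union_left

lemma greedy_mono (strata : ℕ → Finset (Lit P)) : ∀ {j i : ℕ}, i ≤ j →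
    greedy strata i ⊆ greedy strata j := by
  intro j
  induction j with
  | zero => intro i h; simp_all
  | succ k ih =>
    intro i h
    rcases Nat.eq_or_lt_of_le h with h' | h'
    · subst h'; exact Finset.Subset.refl _
    · exact (ih (Nat.lt_succ_iff.mp h')).trans (greedy_sub_succ strata k)

/-- Every element of the greedy set comes from an "added" stratum. -/
lemma mem_greedy (strata : ℕ → Finset (Lit P)) :
    ∀ i, ∀ l ∈ greedy strata i,
      ∃ j < i, l ∈ strata j ∧ greedy strata (j + 1) = greedy strata j ∪ strata j := by
  intro i
  induction i with
  | zero => simp [greedy]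
  | succ k ih =>
    intro l hl
    rw [greedy_succ] at hl
    split at hl
    · obtain ⟨j, hj, h⟩ := ih l hl
      exact ⟨j, Nat.lt_succ_of_lt hj, h⟩
    · rcases Finset.mem_union.mp hl with h | h
      · obtain ⟨j, hj, h⟩ := ih l h
        exact ⟨j, Nat.lt_succ_of_lt hj, h⟩
      · refine ⟨k, Nat.lt_succ_self k, h, ?_⟩
        rw [greedy_succ]
        split
        · next hc => exact absurd hc (by assumption)
        · rfl

lemma greedy_consistent (strata : ℕ → Finset (Lit P)) :
    ∀ i, ConsistentLits (greedy strata i) := by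
  intro i
  induction i with
  | zero => intro l hl; simp [greedy] at hl
  | succ k ih =>
    intro l hl hneg
    rw [greedy_succ] at hl hneg
    by_cases hc : (∃ l ∈ strata k, l.negate ∈ strata k) ∨
        (∃ l ∈ strata k, l.negate ∈ greedy strata k)
    · rw [if_pos hc] at hl hneg
      exact ih l hl hneg
    · rw [if_neg hc] at hl hneg
      push_neg at hc
      rcases Finset.mem_union.mp hl with h1 | h1 <;>
        rcases Finset.mem_union.mp hneg with h2 | h2
      · exact ih l h1 h2
      · exact hc.2 l.negate h2 (by rw [negate_negate]; exact h1)
      · exact hc.2 l h1 h2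
      · exact hc.1 l h1 h2

/-- The canonical world satisfying the greedy set. -/
noncomputable def wstar (strata : ℕ → Finset (Lit P)) (n : ℕ) : P → Bool :=
  fun p => decide ((p, true) ∈ greedy strata (n + 1))

lemma wstar_sat (strata : ℕ → Finset (Lit P)) (n : ℕ) :
    ∀ l ∈ greedy strata (n + 1), satLit (wstar strata n) l := by
  intro l hl
  obtain ⟨p, b⟩ := l
  cases b
  · have : (p, true) ∉ greedy strata (n + 1) :=
      greedy_consistent strata (n + 1) (p, false) hl
    simp [wstar, satLit, this]
  · simp [wstar, satLit, hl]

/-- Added strata are satisfied by `wstar`. -/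
lemma wstar_sat_added (strata : ℕ → Finset (Lit P)) (n : ℕ) {j : ℕ}
    (hj : greedy strata (j + 1) = greedy strata j ∪ strata j) (hjn : j ≤ n) :
    satStratum strata j (wstar strata n) := by
  intro l hl
  apply wstar_sat strata n
  apply greedy_mono strata (Nat.succ_le_succ hjn)
  rw [hj]
  exact Finset.mem_union_right _ hl

lemma wstar_le (strata : ℕ → Finset (Lit P)) (n : ℕ)
    (hdepth : ∀ i, n < i → strata i = ∅) :
    leGamma strata (wstar strata n) w := by
  intro i
  by_cases hi : n < i
  · left
    intro _ l hl
    rw [hdepth i hi] at hl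
    simp at hl
  · push_neg at hi
    by_cases hc : (∃ l ∈ strata i, l.negate ∈ strata i) ∨
        (∃ l ∈ strata i, l.negate ∈ greedy strata i)
    · -- stratum i was skipped
      by_cases hwi : satStratum strata i w
      · rcases hc with ⟨l, hl, hneg⟩ | ⟨l, hl, hneg⟩
        · exact absurd (satLit_not_both (hwi l hl) (hwi l.negate hneg)) not_false
        · right
          obtain ⟨j, hji, hlj, hadd⟩ := mem_greedy strata i l.negate hneg
          have hjn : j ≤ n := by
            by_contra h
            push_neg at h
            rw [hdepth j h] at hlj
            simp at hlj
          refine ⟨j, hji, wstar_sat_added strata n hadd hjn, fun hwj => ?_⟩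
          exact satLit_not_both (hwi l hl) (hwj l.negate hlj)
      · left; intro h; exact absurd h hwi
    · -- stratum i was added
      left
      intro _
      have hadd : greedy strata (i + 1) = greedy strata i ∪ strata i := by
        rw [greedy_succ]; split
        · next h => exact absurd h hc
        · rfl
      exact wstar_sat_added strata n hadd hi

end GMaxAux


/-- for a conjunctive stratified base whose rank-0 stratum is
the (consistent) set of literals of the knowledge base `K`, every
`≤_Γ`-minimal world among the worlds of `⟦K⟧` satisfies every literal of the
greedy maximal consistent subset `Γ^Max`. -/
theorem min_worlds_satisfy_gmax (strata : ℕ → Finset (Lit P)) (n : ℕ)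
    (hdepth : ∀ i, n < i → strata i = ∅)
    (hK : ConsistentLits (strata 0))
    (w : P → Bool) (hw : w ∈ {w : P → Bool | satStratum strata 0 w})
    (hmin : ∀ w' ∈ {w : P → Bool | satStratum strata 0 w},
      leGamma strata w' w → leGamma strata w w') :
    ∀ l ∈ greedy strata (n + 1), satLit w l := by
  classical
  have hKadd : greedy strata 1 = greedy strata 0 ∪ strata 0 := by
    rw [GMaxAux.greedy_succ]
    split
    · next hc =>
      exfalso
      rcases hc with ⟨l, hl, hneg⟩ | ⟨l, hl, hneg⟩
      · exact hK l hl hneg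
      · simp [greedy] at hneg
    · rfl
  have hws0 : satStratum strata 0 (GMaxAux.wstar strata n) :=
    GMaxAux.wstar_sat_added strata n hKadd (Nat.zero_le n)
  have hle : leGamma strata w (GMaxAux.wstar strata n) :=
    hmin (GMaxAux.wstar strata n) hws0 (GMaxAux.wstar_le strata n hdepth)
  -- main induction: w satisfies everything in greedy strata i
  have key : ∀ i, ∀ l ∈ greedy strata i, satLit w l := by
    intro i
    induction i with
    | zero => simp [greedy]
    | succ k ih =>
      intro l hl
      rw [GMaxAux.greedy_succ] at hl
      split at hl
      · exact ih l hl
      · rcases Finset.mem_union.mp hl with h | h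
        · exact ih l h
        · -- need : satStratum strata k w
          have hadd : greedy strata (k + 1) = greedy strata k ∪ strata k := by
            rw [GMaxAux.greedy_succ]; split
            · next hc => exact absurd hc (by assumption)
            · rfl
          have hkn : k ≤ n := by
            by_contra hkn
            push_neg at hkn
            rw [hdepth k hkn] at h
            simp at h
          rcases hle k with hL | ⟨j, hjk, hwj, hwsj⟩
          · exact hL (GMaxAux.wstar_sat_added strata n hadd hkn) l h
          · -- derive a contradiction from the right disjunct
            exfalso
            have hjn : j ≤ n := le_of_lt (lt_of_lt_of_le hjk hkn)
            by_cases hjadd : greedy strata (j + 1) = greedy strata j ∪ strata j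
            · exact hwsj (GMaxAux.wstar_sat_added strata n hjadd hjn)
            · -- stratum j was skipped
              rw [GMaxAux.greedy_succ] at hjadd
              by_cases hc : (∃ l ∈ strata j, l.negate ∈ strata j) ∨
                  (∃ l ∈ strata j, l.negate ∈ greedy strata j)
              · rcases hc with ⟨l', hl', hneg⟩ | ⟨l', hl', hneg⟩
                · exact GMaxAux.satLit_not_both (hwj l' hl') (hwj l'.negate hneg)
                · have : l'.negate ∈ greedy strata k :=
                    GMaxAux.greedy_mono strata (le_of_lt hjk) hneg
                  exact GMaxAux.satLit_not_both (hwj l' hl') (ih l'.negate this)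
              · rw [if_neg hc] at hjadd
                exact hjadd rfl
  exact key (n + 1)
end
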